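/- Let R = ℤ[s1, s2, s3, s12, s13, s23, s123], let I be the principal ideal generated by rel := s12·s13·s23 − (s12² + s13² + s23² + s12·(s1·s2 + s3·s123) + s13·(s1·s3 + s2·s123) + s23·(s2·s3 + s1·s123) + s1·s2·s3·s123 + s1² + s2² + s3² + s123² − 4), and define a weighted degree on monomials by deg(s1^{k1} s2^{k2} s3^{k3} s12^{k12} s13^{k13} s23^{k23} s123^{k123}) = 2(k1+k2) + k3 + 2·k12 + 3(k13 + k23 + k123). Then for all natural numbers a, b, c, the element s12^a · s13^b · s23^c is congruent modulo I to a ℤ-linear combination of monomials s^u with u12·u13·u23 = 0 and weighted degree at most 2a + 3(b + c). -/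
import Mathlib


open MvPolynomial

/-- Variables: `X 0 = s1`, `X 1 = s2`, `X 2 = s3`, `X 3 = s12`, `X 4 = s13`, `X 5 = s23`,
`X 6 = s123`. The Bullock–Przytycki relation for the skein algebra of the four-holed
sphere at `q = 1`. -/
noncomputable def bpRel : MvPolynomial (Fin 7) ℤ :=
  X 3 * X 4 * X 5 -
    (X 3 ^ 2 + X 4 ^ 2 + X 5 ^ 2
      + X 3 * (X 0 * X 1 + X 2 * X 6) + X 4 * (X 0 * X 2 + X 1 * X 6)
      + X 5 * (X 1 * X 2 + X 0 * X 6)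
      + X 0 * X 1 * X 2 * X 6 + X 0 ^ 2 + X 1 ^ 2 + X 2 ^ 2 + X 6 ^ 2 - 4)

/-- Weighted degree: weights 2,2,1,2,3,3,3 on `s1,s2,s3,s12,s13,s23,s123`. -/
def wdeg (u : Fin 7 → ℕ) : ℕ :=
  2 * (u 0 + u 1) + u 2 + 2 * u 3 + 3 * (u 4 + u 5 + u 6)

def Red (d : ℕ) (p : MvPolynomial (Fin 7) ℤ) : Prop :=
  ∃ q : MvPolynomial (Fin 7) ℤ,
    (∀ v ∈ q.support, v 3 * v 4 * v 5 = 0 ∧ wdeg ⇑v ≤ d) ∧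
    p - q ∈ Ideal.span {bpRel}

lemma red_mono {d e : ℕ} {p} (h : d ≤ e) (hp : Red d p) : Red e p := by
  obtain ⟨q, hq, hm⟩ := hp
  exact ⟨q, fun v hv => ⟨(hq v hv).1, (hq v hv).2.trans h⟩, hm⟩

lemma red_congr {d : ℕ} {p p'} (hp : Red d p) (h : p' - p ∈ Ideal.span {bpRel}) :
    Red d p' := by
  obtain ⟨q, hq, hm⟩ := hp
  refine ⟨q, hq, ?_⟩
  have := Ideal.add_mem _ h hm
  simpa using this

lemma red_add {d : ℕ} {p p'} (hp : Red d p) (hp' : Red d p') : Red d (p + p') := by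
  obtain ⟨q, hq, hm⟩ := hp
  obtain ⟨q', hq', hm'⟩ := hp'
  refine ⟨q + q', fun v hv => ?_, ?_⟩
  · rcases Finset.mem_union.mp (Finsupp.support_add hv) with h | h
    exacts [hq v h, hq' v h]
  · have := Ideal.add_mem _ hm hm'
    convert this using 1; ring

lemma red_smul {d : ℕ} {p} (z : ℤ) (hp : Red d p) : Red d (z • p) := by
  obtain ⟨q, hq, hm⟩ := hp
  refine ⟨z • q, fun v hv => hq v (Finsupp.support_smul hv), ?_⟩
  have : z • p - z • q = C z * (p - q) := by
    rw [← smul_sub, smul_eq_C_mul]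
  rw [this]
  exact Ideal.mul_mem_left _ _ hm

lemma red_monomial {d : ℕ} {u : Fin 7 →₀ ℕ} (h0 : u 3 * u 4 * u 5 = 0)
    (hd : wdeg ⇑u ≤ d) (z : ℤ) : Red d (monomial u z) := by
  refine ⟨monomial u z, fun v hv => ?_, by simp [Ideal.zero_mem]⟩
  have := MvPolynomial.support_monomial_subset hv
  simp only [Finset.mem_singleton] at this
  subst this
  exact ⟨h0, hd⟩

lemma wdeg_add (v w : Fin 7 →₀ ℕ) : wdeg ⇑(v + w) = wdeg ⇑v + wdeg ⇑w := by
  simp only [wdeg, Finsupp.coe_add, Pi.add_apply]; ring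

lemma red_sub {d : ℕ} {p p'} (hp : Red d p) (hp' : Red d p') : Red d (p - p') := by
  have := red_add hp (red_smul (-1) hp')
  simpa [sub_eq_add_neg] using this

lemma hX (i : Fin 7) : (X i : MvPolynomial (Fin 7) ℤ) = monomial (Finsupp.single i 1) 1 := by
  rw [← pow_one (X i), X_pow_eq_monomial]

lemma test1 : (X 3 * X 0 * X 1 : MvPolynomial (Fin 7) ℤ) =
    monomial (Finsupp.single 3 1 + Finsupp.single 0 1 + Finsupp.single 1 1) 1 := by
  simp [hX, monomial_mul]

lemma test2 : wdeg ⇑((Finsupp.single 3 1 + Finsupp.single 0 1 + Finsupp.single 1 1 : Fin 7 →₀ ℕ)) ≤ 8 := by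
  simp [wdeg, Finsupp.single_apply]

lemma test3 : (Finsupp.single 3 1 + Finsupp.single 0 1 + Finsupp.single 1 1 : Fin 7 →₀ ℕ) 3
    + (Finsupp.single 3 1 + Finsupp.single 0 1 + Finsupp.single 1 1 : Fin 7 →₀ ℕ) 4
    + (Finsupp.single 3 1 + Finsupp.single 0 1 + Finsupp.single 1 1 : Fin 7 →₀ ℕ) 5 ≤ 2 := by
  simp [Finsupp.single_apply]

lemma test4 (u' : Fin 7 →₀ ℕ) : monomial u' (1:ℤ) * 4 = (4:ℤ) • monomial u' 1 := by
  rw [smul_eq_C_mul]; ring_nf; simp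

lemma red_key : ∀ n : ℕ, ∀ u : Fin 7 →₀ ℕ, u 3 + u 4 + u 5 ≤ n →
    Red (wdeg ⇑u) (monomial u 1) := by
  intro n
  induction n using Nat.strong_induction_on with
  | _ n IH =>
  intro u hun
  by_cases h0 : u 3 * u 4 * u 5 = 0
  · exact red_monomial h0 le_rfl 1
  · have h3 : 1 ≤ u 3 := Nat.pos_of_ne_zero (by intro h; apply h0; simp [h])
    have h4 : 1 ≤ u 4 := Nat.pos_of_ne_zero (by intro h; apply h0; simp [h])
    have h5 : 1 ≤ u 5 := Nat.pos_of_ne_zero (by intro h; apply h0; simp [h])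
    set e : Fin 7 →₀ ℕ := Finsupp.single 3 1 + Finsupp.single 4 1 + Finsupp.single 5 1
      with he_def
    set u' : Fin 7 →₀ ℕ := u - e with hu'_def
    have hle : e ≤ u := by
      rw [Finsupp.le_def]
      intro i
      fin_cases i <;> simp [he_def, Finsupp.single_apply] <;> omega
    have he : u' + e = u := tsub_add_cancel_of_le hle
    have hu'3 : u' 3 = u 3 - 1 := by
      simp [hu'_def, he_def, Finsupp.tsub_apply, Finsupp.single_apply]
    have hu'4 : u' 4 = u 4 - 1 := by
      simp [hu'_def, he_def, Finsupp.tsub_apply, Finsupp.single_apply]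
    have hu'5 : u' 5 = u 5 - 1 := by
      simp [hu'_def, he_def, Finsupp.tsub_apply, Finsupp.single_apply]
    have hwe : wdeg ⇑e = 8 := by simp [wdeg, he_def, Finsupp.single_apply]
    have hwu : wdeg ⇑u' + 8 = wdeg ⇑u := by rw [← hwe, ← wdeg_add, he]
    have step : ∀ w : Fin 7 →₀ ℕ, w 3 + w 4 + w 5 ≤ 2 → wdeg ⇑w ≤ 8 →
        Red (wdeg ⇑u) (monomial u' (1:ℤ) * monomial w 1) := by
      intro w hw2 hw8
      rw [monomial_mul, one_mul]
      have hlt : (u' + w) 3 + (u' + w) 4 + (u' + w) 5 ≤ n - 1 := by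
        simp only [Finsupp.add_apply, hu'3, hu'4, hu'5]; omega
      exact red_mono (by rw [wdeg_add]; omega) (IH (n-1) (by omega) (u' + w) hlt)
    have step0 : Red (wdeg ⇑u) (monomial u' (1:ℤ)) :=
      red_mono (by omega) (IH (n-1) (by omega) u' (by simp only [hu'3, hu'4, hu'5]; omega))
    have hRred : Red (wdeg ⇑u) (monomial u' (1:ℤ) * (X 3 * X 4 * X 5 - bpRel)) := by
      have hexp : monomial u' (1:ℤ) * (X 3 * X 4 * X 5 - bpRel) =
          monomial u' 1 * (X 3 ^ 2) + monomial u' 1 * (X 4 ^ 2) + monomial u' 1 * (X 5 ^ 2)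
          + monomial u' 1 * (X 3 * X 0 * X 1) + monomial u' 1 * (X 3 * X 2 * X 6)
          + monomial u' 1 * (X 4 * X 0 * X 2) + monomial u' 1 * (X 4 * X 1 * X 6)
          + monomial u' 1 * (X 5 * X 1 * X 2) + monomial u' 1 * (X 5 * X 0 * X 6)
          + monomial u' 1 * (X 0 * X 1 * X 2 * X 6)
          + monomial u' 1 * (X 0 ^ 2) + monomial u' 1 * (X 1 ^ 2) + monomial u' 1 * (X 2 ^ 2)
          + monomial u' 1 * (X 6 ^ 2) - monomial u' 1 * 4 := by
        rw [bpRel]; ring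
      rw [hexp]
      have pow_case : ∀ i : Fin 7, i = 0 ∨ i = 1 ∨ i = 2 ∨ i = 3 ∨ i = 6 →
          Red (wdeg ⇑u) (monomial u' (1:ℤ) * (X i ^ 2)) := by
        intro i hi
        rw [X_pow_eq_monomial]
        refine step _ ?_ ?_ <;>
          rcases hi with rfl | rfl | rfl | rfl | rfl <;>
          simp [wdeg, Finsupp.single_apply]
      have T45 : Red (wdeg ⇑u) (monomial u' (1:ℤ) * (X 4 ^ 2)) := by
        rw [X_pow_eq_monomial]
        exact step _ (by simp [Finsupp.single_apply]) (by simp [wdeg, Finsupp.single_apply])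
      have T55 : Red (wdeg ⇑u) (monomial u' (1:ℤ) * (X 5 ^ 2)) := by
        rw [X_pow_eq_monomial]
        exact step _ (by simp [Finsupp.single_apply]) (by simp [wdeg, Finsupp.single_apply])
      have triple : ∀ i j k : Fin 7,
          (X i * X j * X k : MvPolynomial (Fin 7) ℤ) =
            monomial (Finsupp.single i 1 + Finsupp.single j 1 + Finsupp.single k 1) 1 := by
        intro i j k; simp [hX, monomial_mul]
      have quad : (X 0 * X 1 * X 2 * X 6 : MvPolynomial (Fin 7) ℤ) =
          monomial (Finsupp.single 0 1 + Finsupp.single 1 1 + Finsupp.single 2 1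
            + Finsupp.single 6 1) 1 := by
        simp [hX, monomial_mul]
      have Tlast : Red (wdeg ⇑u) (monomial u' (1:ℤ) * 4) := by
        have h4' : monomial u' (1:ℤ) * 4 = (4:ℤ) • monomial u' 1 := by
          rw [smul_eq_C_mul]; ring_nf; simp
        rw [h4']; exact red_smul 4 step0
      refine red_sub (red_add (red_add (red_add (red_add (red_add (red_add (red_add
        (red_add (red_add (red_add (red_add (red_add (red_add
        (pow_case 3 (by tauto)) T45) T55)
        ?_) ?_) ?_) ?_) ?_) ?_) ?_)
        (pow_case 0 (by tauto))) (pow_case 1 (by tauto))) (pow_case 2 (by tauto)))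
        (pow_case 6 (by tauto))) Tlast
      · rw [triple]; exact step _ (by simp [Finsupp.single_apply]) (by simp [wdeg, Finsupp.single_apply])
      · rw [triple]; exact step _ (by simp [Finsupp.single_apply]) (by simp [wdeg, Finsupp.single_apply])
      · rw [triple]; exact step _ (by simp [Finsupp.single_apply]) (by simp [wdeg, Finsupp.single_apply])
      · rw [triple]; exact step _ (by simp [Finsupp.single_apply]) (by simp [wdeg, Finsupp.single_apply])
      · rw [triple]; exact step _ (by simp [Finsupp.single_apply]) (by simp [wdeg, Finsupp.single_apply])
      · rw [triple]; exact step _ (by simp [Finsupp.single_apply]) (by simp [wdeg, Finsupp.single_apply])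
      · rw [quad]; exact step _ (by simp [Finsupp.single_apply]) (by simp [wdeg, Finsupp.single_apply])
    refine red_congr hRred ?_
    have h1 : monomial u' (1:ℤ) * (X 3 * X 4 * X 5) = monomial u 1 := by
      have hXe : (X 3 * X 4 * X 5 : MvPolynomial (Fin 7) ℤ) = monomial e 1 := by
        simp [he_def, hX, monomial_mul]
      rw [hXe, monomial_mul, one_mul, he]
    have h2 : monomial u 1 - monomial u' (1:ℤ) * (X 3 * X 4 * X 5 - bpRel) =
        monomial u' 1 * bpRel := by rw [← h1]; ring
    rw [h2]
    exact Ideal.mul_mem_left _ _ (Ideal.subset_span (Set.mem_singleton _))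

def fe : (Fin 7 →₀ ℕ) ↪ (Fin 7 → ℕ) :=
  ⟨fun v => (v : Fin 7 → ℕ), DFunLike.coe_injective⟩

lemma prod_X_pow_univ (v : Fin 7 →₀ ℕ) :
    (∏ i, X i ^ v i : MvPolynomial (Fin 7) ℤ) = monomial v 1 := by
  rw [← prod_X_pow_eq_monomial]
  exact (Finset.prod_subset (Finset.subset_univ _) (fun i _ hi => by
    rw [Finsupp.notMem_support_iff.mp hi, pow_zero])).symm

theorem stmt_10 (a b c : ℕ) :
    ∃ (S : Finset (Fin 7 → ℕ)) (C : (Fin 7 → ℕ) → ℤ),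
      (∀ u ∈ S, u 3 * u 4 * u 5 = 0 ∧ wdeg u ≤ 2 * a + 3 * (b + c)) ∧
      X 3 ^ a * X 4 ^ b * X 5 ^ c - ∑ u ∈ S, C u • ∏ i, X i ^ u i ∈
        Ideal.span {bpRel} := by
  set u0 : Fin 7 →₀ ℕ := Finsupp.single 3 a + Finsupp.single 4 b + Finsupp.single 5 c
    with hu0
  have hmon : (X 3 ^ a * X 4 ^ b * X 5 ^ c : MvPolynomial (Fin 7) ℤ) = monomial u0 1 := by
    simp [hu0, X_pow_eq_monomial, monomial_mul]
  have hw : wdeg ⇑u0 = 2 * a + 3 * (b + c) := by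
    simp [wdeg, hu0, Finsupp.single_apply]
  obtain ⟨q, hq, hm⟩ := red_key (a + b + c) u0 (by simp [hu0, Finsupp.single_apply])
  refine ⟨q.support.map fe,
    fun f => coeff (Finsupp.equivFunOnFinite.symm f) q, ?_, ?_⟩
  · intro f hf
    rw [Finset.mem_map] at hf
    obtain ⟨v, hv, rfl⟩ := hf
    have := hq v hv
    exact ⟨this.1, hw ▸ this.2⟩
  · have hsum : ∑ f ∈ q.support.map fe,
        (coeff (Finsupp.equivFunOnFinite.symm f) q) • ∏ i, (X i : MvPolynomial (Fin 7) ℤ) ^ f i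
        = q := by
      rw [Finset.sum_map]
      conv_rhs => rw [as_sum q]
      refine Finset.sum_congr rfl fun v hv => ?_
      simp only [fe, Function.Embedding.coeFn_mk, Finsupp.equivFunOnFinite_symm_coe]
      rw [prod_X_pow_univ, smul_monomial, smul_eq_mul, mul_one]
    rw [hsum, hmon]
    exact hm
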